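/- Let k be a commutative ring which is a ℚ-algebra, λ ∈ k, and ℓ ∈ ℕ. On the free k-module C(λ)_ℓ with basis {d_0, d_1, …, d_ℓ}, the k-linear maps ε with ε(d_0) = 1 and ε(d_n) = 0 for 0 < n ≤ ℓ, and δ with δ(d_n) = Σ_{r+s+t=n} (n!/(r!·s!·t!))·λ^t·(d_{r+t} ⊗ d_{s+t}), make C(λ)_ℓ a coassociative counital k-coalgebra. Moreover, for any associative unital k-algebra A, the k-module isomorphism Hom_k(C(λ)_ℓ, A) → A^{ℓ+1}, f ↦ (f(d_0), …, f(d_ℓ)), carries the convolution unit to (1, 0, …, 0) and the convolution product f ∗ g to the λ-weighted Hurwitz product: (f ∗ g)(d_n) = Σ_{r+s+t=n} (n!/(r!·s!·t!))·λ^t·f(d_{r+t})·g(d_{s+t}). -/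

import Mathlib

open TensorProduct

/-- The basis vector `d_m` of the free `k`-module on `{d_0, …, d_ℓ}`,
modelled as `Fin (ℓ+1) → k`. -/
def dB (k : Type*) [CommRing k] (l : ℕ) (m : ℕ) : Fin (l + 1) → k :=
  fun i => if (i : ℕ) = m then 1 else 0

/-- The counit of `C(λ)_ℓ`: `ε(d_0) = 1` and `ε(d_n) = 0` for `0 < n ≤ ℓ`. -/
def epsCl (k : Type*) [CommRing k] (l : ℕ) : (Fin (l + 1) → k) →ₗ[k] k :=
  LinearMap.proj (0 : Fin (l + 1))

/-- The element `∑_{r+s+t=n} (n!/(r!·s!·t!))·λ^t·(d_{r+t} ⊗ d_{s+t})` of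
`C(λ)_ℓ ⊗ C(λ)_ℓ`, the triples `(r,s,t)` being enumerated as `r = x.1`, `s = y.1`,
`t = y.2`. -/
noncomputable def wCl (k : Type*) [CommRing k] (l : ℕ) (lam : k) (n : ℕ) :
    (Fin (l + 1) → k) ⊗[k] (Fin (l + 1) → k) :=
  ∑ x ∈ Finset.HasAntidiagonal.antidiagonal n, ∑ y ∈ Finset.HasAntidiagonal.antidiagonal x.2,
    (n.factorial / (x.1.factorial * y.1.factorial * y.2.factorial)) •
      (lam ^ y.2 • (dB k l (x.1 + y.2) ⊗ₜ[k] dB k l (y.1 + y.2)))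

/-- The comultiplication of `C(λ)_ℓ`:
`δ(d_n) = ∑_{r+s+t=n} (n!/(r!·s!·t!))·λ^t·(d_{r+t} ⊗ d_{s+t})`. -/
noncomputable def delCl (k : Type*) [CommRing k] (l : ℕ) (lam : k) :
    (Fin (l + 1) → k) →ₗ[k] (Fin (l + 1) → k) ⊗[k] (Fin (l + 1) → k) :=
  ∑ n : Fin (l + 1), (LinearMap.proj n).smulRight (wCl k l lam (n : ℕ))

/-- The convolution product `f ∗ g = μ_A ∘ (f ⊗ g) ∘ δ` on `Hom_k(C(λ)_ℓ, A)`. -/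
noncomputable def convCl {k A : Type*} [CommRing k] [Ring A] [Algebra k A] (l : ℕ)
    (lam : k) (f g : (Fin (l + 1) → k) →ₗ[k] A) : (Fin (l + 1) → k) →ₗ[k] A :=
  LinearMap.mul' k A ∘ₗ TensorProduct.map f g ∘ₗ delCl k l lam

/-!
Send `d_n` to `X ^ n ∈ k[X]`. On `k[X]` let `Δ` be the algebra map with
`Δ X = X ⊗ 1 + 1 ⊗ X + λ • X ⊗ X` and let the counit be evaluation at `0`; being algebra maps,
their coassociativity and counit laws only need checking on `X`. Two applications of the binomial
theorem turn `Δ (X ^ n)` into the image of `δ (d_n)`, so the split injection `d_n ↦ X ^ n`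
intertwines `δ` with `Δ`, and the coalgebra laws descend to `C(λ)_ℓ`. The Hurwitz formula is
`δ (d_n)` pushed through `μ_A ∘ (f ⊗ g)`.
-/

namespace LinearMap

variable {R C D : Type*} [CommSemiring R] [AddCommMonoid C] [Module R C]
  [AddCommMonoid D] [Module R D] {ι : C →ₗ[R] D} {δ : C →ₗ[R] C ⊗[R] C}
  {Δ : D →ₗ[R] D ⊗[R] D}

theorem coassoc_of_comp_eq_map_comp {π : D →ₗ[R] C} (hπι : π ∘ₗ ι = id)
    (hΔ : Δ ∘ₗ ι = map ι ι ∘ₗ δ)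
    (hD : (TensorProduct.assoc R D D D).toLinearMap ∘ₗ Δ.rTensor D ∘ₗ Δ = Δ.lTensor D ∘ₗ Δ) :
    (TensorProduct.assoc R C C C).toLinearMap ∘ₗ δ.rTensor C ∘ₗ δ = δ.lTensor C ∘ₗ δ := by
  have hinj : Function.Injective (map ι (map ι ι)) := by
    refine Function.LeftInverse.injective (g := map π (map π π)) fun x => ?_
    rw [← comp_apply, ← map_comp, ← map_comp, hπι, map_id, map_id, id_apply]
  have hr : map (map ι ι) ι ∘ₗ δ.rTensor C = Δ.rTensor D ∘ₗ map ι ι := by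
    rw [map_comp_rTensor, ← hΔ, rTensor_comp_map]
  have hl : map ι (map ι ι) ∘ₗ δ.lTensor C = Δ.lTensor D ∘ₗ map ι ι := by
    rw [map_comp_lTensor, ← hΔ, lTensor_comp_map]
  ext c
  apply hinj
  have := congr($hD (ι c))
  simp only [coe_comp, Function.comp_apply, LinearEquiv.coe_coe] at this ⊢
  rw [map_map_assoc, ← comp_apply (map (map ι ι) ι), hr, ← comp_apply (map ι (map ι ι)), hl]
  simpa only [coe_comp, Function.comp_apply, ← comp_apply (map ι ι) δ, ← hΔ] using this

theorem lid_rTensor_comp_of_comp_eq_map_comp (hι : Function.Injective ι)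
    (hΔ : Δ ∘ₗ ι = map ι ι ∘ₗ δ) {ε : C →ₗ[R] R} {e : D →ₗ[R] R} (he : e ∘ₗ ι = ε)
    (hD : (TensorProduct.lid R D).toLinearMap ∘ₗ e.rTensor D ∘ₗ Δ = id) :
    (TensorProduct.lid R C).toLinearMap ∘ₗ ε.rTensor C ∘ₗ δ = id := by
  have hlid : ι ∘ₗ TensorProduct.lid R C = (TensorProduct.lid R D).toLinearMap ∘ₗ ι.lTensor R :=
    TensorProduct.ext' fun r c => by simp
  have hε : ι.lTensor R ∘ₗ ε.rTensor C = e.rTensor D ∘ₗ map ι ι := by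
    rw [lTensor_comp_rTensor, rTensor_comp_map, he]
  refine (cancel_left hι).mp ?_
  rw [← comp_assoc, hlid, comp_assoc, ← comp_assoc δ, hε, comp_assoc, ← hΔ,
    ← comp_assoc ι, ← comp_assoc ι, hD, id_comp, comp_id]

theorem rid_lTensor_comp_of_comp_eq_map_comp (hι : Function.Injective ι)
    (hΔ : Δ ∘ₗ ι = map ι ι ∘ₗ δ) {ε : C →ₗ[R] R} {e : D →ₗ[R] R} (he : e ∘ₗ ι = ε)
    (hD : (TensorProduct.rid R D).toLinearMap ∘ₗ e.lTensor D ∘ₗ Δ = id) :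
    (TensorProduct.rid R C).toLinearMap ∘ₗ ε.lTensor C ∘ₗ δ = id := by
  have hrid : ι ∘ₗ TensorProduct.rid R C = (TensorProduct.rid R D).toLinearMap ∘ₗ ι.rTensor R :=
    TensorProduct.ext' fun c r => by simp
  have hε : ι.rTensor R ∘ₗ ε.lTensor C = e.lTensor D ∘ₗ map ι ι := by
    rw [rTensor_comp_lTensor, lTensor_comp_map, he]
  refine (cancel_left hι).mp ?_
  rw [← comp_assoc, hrid, comp_assoc, ← comp_assoc δ, hε, comp_assoc, ← hΔ,
    ← comp_assoc ι, ← comp_assoc ι, hD, id_comp, comp_id]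

end LinearMap

section

open Polynomial Finset Nat

theorem Nat.choose_mul_choose_eq_factorial_div {n r m s t : ℕ} (hn : r + m = n) (hm : s + t = m) :
    n.choose r * m.choose s = n ! / (r ! * s ! * t !) := by
  have hr : n.choose r * r ! * m ! = n ! := by
    rw [← Nat.choose_mul_factorial_mul_factorial (show r ≤ n by omega), show n - r = m by omega]
  have hs : m.choose s * s ! * t ! = m ! := by
    rw [← Nat.choose_mul_factorial_mul_factorial (show s ≤ m by omega), show m - s = t by omega]
  refine (Nat.div_eq_of_eq_mul_left (by positivity) ?_).symm
  rw [← hr, ← hs]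
  ring

namespace Polynomial

variable {k : Type*} [CommRing k]

noncomputable def weightedComul (lam : k) : k[X] →ₐ[k] k[X] ⊗[k] k[X] :=
  aeval (X ⊗ₜ 1 + 1 ⊗ₜ X + lam • X ⊗ₜ X)

theorem weightedComul_coassoc (lam : k) :
    (TensorProduct.assoc k k[X] k[X] k[X]).toLinearMap ∘ₗ
        (weightedComul lam).toLinearMap.rTensor k[X] ∘ₗ (weightedComul lam).toLinearMap =
      (weightedComul lam).toLinearMap.lTensor k[X] ∘ₗ (weightedComul lam).toLinearMap := by
  have h : (Algebra.TensorProduct.assoc k k k k[X] k[X] k[X]).toAlgHom.comp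
        ((Algebra.TensorProduct.map (weightedComul lam) (AlgHom.id k k[X])).comp
          (weightedComul lam)) =
      (Algebra.TensorProduct.map (AlgHom.id k k[X]) (weightedComul lam)).comp
        (weightedComul lam) := by
    apply algHom_ext
    simp only [AlgHom.coe_comp, Function.comp_apply, weightedComul, aeval_X, map_add, map_smul,
      Algebra.TensorProduct.map_tmul, AlgHom.coe_id, id_eq, map_one, Algebra.TensorProduct.one_def,
      TensorProduct.tmul_add, TensorProduct.add_tmul, ← TensorProduct.smul_tmul',
      TensorProduct.tmul_smul, AlgEquiv.coe_toAlgHom, Algebra.TensorProduct.assoc_tmul]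
    module
  exact congrArg AlgHom.toLinearMap h

theorem weightedComul_counit_left (lam : k) :
    (TensorProduct.lid k k[X]).toLinearMap ∘ₗ
        (aeval (0 : k)).toLinearMap.rTensor k[X] ∘ₗ (weightedComul lam).toLinearMap =
      LinearMap.id := by
  have h : (Algebra.TensorProduct.lid k k[X]).toAlgHom.comp
      ((Algebra.TensorProduct.map (aeval (0 : k)) (AlgHom.id k k[X])).comp
        (weightedComul lam)) = AlgHom.id k k[X] := by
    apply algHom_ext
    simp [weightedComul]
  exact congrArg AlgHom.toLinearMap h

theorem weightedComul_counit_right (lam : k) :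
    (TensorProduct.rid k k[X]).toLinearMap ∘ₗ
        (aeval (0 : k)).toLinearMap.lTensor k[X] ∘ₗ (weightedComul lam).toLinearMap =
      LinearMap.id := by
  have h : (Algebra.TensorProduct.rid k k k[X]).toAlgHom.comp
      ((Algebra.TensorProduct.map (AlgHom.id k k[X]) (aeval (0 : k))).comp
        (weightedComul lam)) = AlgHom.id k k[X] := by
    apply algHom_ext
    simp [weightedComul]
  exact congrArg AlgHom.toLinearMap h

theorem weightedComul_X_pow (lam : k) (n : ℕ) :
    weightedComul lam (X ^ n) =
      ∑ x ∈ antidiagonal n, ∑ y ∈ antidiagonal x.2,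
        (n.choose x.1 * x.2.choose y.1) •
          (lam ^ y.2 • ((X ^ (x.1 + y.2) : k[X]) ⊗ₜ[k] (X ^ (y.1 + y.2) : k[X]))) := by
  rw [map_pow, weightedComul, aeval_X, add_assoc, (Commute.all _ _).add_pow']
  refine Finset.sum_congr rfl fun x _ => ?_
  rw [(Commute.all _ _).add_pow', Finset.mul_sum, Finset.smul_sum]
  refine Finset.sum_congr rfl fun y _ => ?_
  simp only [_root_.smul_pow, Algebra.TensorProduct.tmul_pow, one_pow, mul_smul_comm,
    Algebra.TensorProduct.tmul_mul_tmul, one_mul, ← pow_add, mul_smul]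

end Polynomial

variable {k : Type*} [CommRing k]

theorem dB_eq_single (l : ℕ) (i : Fin (l + 1)) : dB k l i = Pi.single i 1 := by
  funext j
  simp [dB, Pi.single_apply, Fin.ext_iff]

theorem delCl_dB {l n : ℕ} (lam : k) (hn : n ≤ l) : delCl k l lam (dB k l n) = wCl k l lam n := by
  rw [delCl, LinearMap.sum_apply, Finset.sum_eq_single (⟨n, by omega⟩ : Fin (l + 1))]
  · simp [dB]
  · intro m _ hm
    have : (m : ℕ) ≠ n := fun h => hm (Fin.ext h)
    simp [dB, this]
  · simp

noncomputable def toPolyCl (k : Type*) [CommRing k] (l : ℕ) : (Fin (l + 1) → k) →ₗ[k] k[X] :=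
  (degreeLT k (l + 1)).subtype ∘ₗ (degreeLTEquiv k (l + 1)).symm.toLinearMap

noncomputable def coeffsCl (k : Type*) [CommRing k] (l : ℕ) : k[X] →ₗ[k] (Fin (l + 1) → k) :=
  LinearMap.pi fun i => lcoeff k i

theorem coeffsCl_comp_toPolyCl (l : ℕ) : coeffsCl k l ∘ₗ toPolyCl k l = LinearMap.id :=
  LinearMap.ext fun v => funext fun i => congrFun ((degreeLTEquiv k (l + 1)).apply_symm_apply v) i

theorem toPolyCl_injective (l : ℕ) : Function.Injective (toPolyCl k l) :=
  Function.LeftInverse.injective (g := coeffsCl k l)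
    (LinearMap.congr_fun (coeffsCl_comp_toPolyCl l))

theorem toPolyCl_dB {l n : ℕ} (hn : n ≤ l) : toPolyCl k l (dB k l n) = X ^ n := by
  have hmem : (X ^ n : k[X]) ∈ degreeLT k (l + 1) := by
    rw [mem_degreeLT]
    exact (degree_X_pow_le n).trans_lt (by exact_mod_cast Nat.lt_succ_of_le hn)
  rw [toPolyCl, LinearMap.comp_apply, LinearEquiv.coe_coe,
    show dB k l n = degreeLTEquiv k (l + 1) ⟨X ^ n, hmem⟩ by
      ext i; simp [degreeLTEquiv, dB, coeff_X_pow, eq_comm],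
    LinearEquiv.symm_apply_apply, Submodule.subtype_apply]

theorem aeval_zero_comp_toPolyCl (l : ℕ) :
    (aeval (0 : k)).toLinearMap ∘ₗ toPolyCl k l = epsCl k l := by
  refine LinearMap.ext fun v => ?_
  rw [LinearMap.comp_apply, AlgHom.toLinearMap_apply, ← coeff_zero_eq_aeval_zero]
  exact congrFun (LinearMap.congr_fun (coeffsCl_comp_toPolyCl l) v) 0

theorem map_toPolyCl_wCl {l n : ℕ} (lam : k) (hn : n ≤ l) :
    TensorProduct.map (toPolyCl k l) (toPolyCl k l) (wCl k l lam n) =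
      weightedComul lam (X ^ n) := by
  rw [weightedComul_X_pow, wCl, map_sum]
  refine Finset.sum_congr rfl fun x hx => ?_
  rw [map_sum]
  refine Finset.sum_congr rfl fun y hy => ?_
  rw [HasAntidiagonal.mem_antidiagonal] at hx hy
  rw [map_nsmul, map_smul, TensorProduct.map_tmul, toPolyCl_dB (by omega), toPolyCl_dB (by omega),
    Nat.choose_mul_choose_eq_factorial_div hx hy]

theorem weightedComul_comp_toPolyCl (l : ℕ) (lam : k) :
    (weightedComul lam).toLinearMap ∘ₗ toPolyCl k l =
      TensorProduct.map (toPolyCl k l) (toPolyCl k l) ∘ₗ delCl k l lam := by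
  refine LinearMap.pi_ext' fun i => LinearMap.ext_ring ?_
  simp only [LinearMap.comp_apply, LinearMap.coe_single, ← dB_eq_single, AlgHom.toLinearMap_apply]
  rw [delCl_dB lam i.is_le, toPolyCl_dB i.is_le, map_toPolyCl_wCl lam i.is_le]

theorem convCl_dB {A : Type*} [Ring A] [Algebra k A] {l n : ℕ} (lam : k)
    (f g : (Fin (l + 1) → k) →ₗ[k] A) (hn : n ≤ l) :
    convCl l lam f g (dB k l n) =
      ∑ x ∈ antidiagonal n, ∑ y ∈ antidiagonal x.2,
        (n ! / (x.1 ! * y.1 ! * y.2 !)) •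
          (lam ^ y.2 • (f (dB k l (x.1 + y.2)) * g (dB k l (y.1 + y.2)))) := by
  simp only [convCl, LinearMap.comp_apply, delCl_dB lam hn, wCl, map_sum, map_nsmul, map_smul,
    TensorProduct.map_tmul, LinearMap.mul'_apply]

end

theorem stmt18_general {k A : Type*} [CommRing k] [Ring A] [Algebra k A]
    (l : ℕ) (lam : k) :
    -- the stated values of ε and δ on the basis
    (epsCl k l (dB k l 0) = 1) ∧
    (∀ n : ℕ, 0 < n → n ≤ l → epsCl k l (dB k l n) = 0) ∧
    (∀ n : ℕ, n ≤ l → delCl k l lam (dB k l n) = wCl k l lam n) ∧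
    -- coassociativity
    (∀ v : Fin (l + 1) → k,
      TensorProduct.assoc k _ _ _
          (LinearMap.rTensor (Fin (l + 1) → k) (delCl k l lam) (delCl k l lam v)) =
        LinearMap.lTensor (Fin (l + 1) → k) (delCl k l lam) (delCl k l lam v)) ∧
    -- counit laws
    (∀ v : Fin (l + 1) → k,
      TensorProduct.lid k (Fin (l + 1) → k)
        (LinearMap.rTensor (Fin (l + 1) → k) (epsCl k l) (delCl k l lam v)) = v) ∧
    (∀ v : Fin (l + 1) → k,
      TensorProduct.rid k (Fin (l + 1) → k)
        (LinearMap.lTensor (Fin (l + 1) → k) (epsCl k l) (delCl k l lam v)) = v) ∧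
    -- the convolution unit corresponds to (1, 0, …, 0)
    (algebraMap k A (epsCl k l (dB k l 0)) = 1) ∧
    (∀ n : ℕ, 0 < n → n ≤ l → algebraMap k A (epsCl k l (dB k l n)) = 0) ∧
    -- the convolution product is the λ-weighted Hurwitz product
    (∀ f g : (Fin (l + 1) → k) →ₗ[k] A, ∀ n : ℕ, n ≤ l →
      convCl l lam f g (dB k l n) =
        ∑ x ∈ Finset.HasAntidiagonal.antidiagonal n, ∑ y ∈ Finset.HasAntidiagonal.antidiagonal x.2,
          (n.factorial / (x.1.factorial * y.1.factorial * y.2.factorial)) •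
            (lam ^ y.2 • (f (dB k l (x.1 + y.2)) * g (dB k l (y.1 + y.2))))) := by
  have hε₀ : epsCl k l (dB k l 0) = 1 := by simp [epsCl, dB]
  have hε : ∀ n, 0 < n → n ≤ l → epsCl k l (dB k l n) = 0 := fun n hn _ => by
    simp [epsCl, dB, hn.ne]
  have hΔ := weightedComul_comp_toPolyCl l lam
  have hcoassoc := LinearMap.coassoc_of_comp_eq_map_comp (coeffsCl_comp_toPolyCl l) hΔ
    (Polynomial.weightedComul_coassoc lam)
  have hlid := LinearMap.lid_rTensor_comp_of_comp_eq_map_comp (toPolyCl_injective l) hΔ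
    (aeval_zero_comp_toPolyCl l) (Polynomial.weightedComul_counit_left lam)
  have hrid := LinearMap.rid_lTensor_comp_of_comp_eq_map_comp (toPolyCl_injective l) hΔ
    (aeval_zero_comp_toPolyCl l) (Polynomial.weightedComul_counit_right lam)
  exact ⟨hε₀, hε, fun n hn => delCl_dB lam hn, LinearMap.congr_fun hcoassoc,
    LinearMap.congr_fun hlid, LinearMap.congr_fun hrid, by rw [hε₀, map_one],
    fun n h0 hn => by rw [hε n h0 hn, map_zero], fun f g n hn => convCl_dB lam f g hn⟩

/-- On the free `k`-module `C(λ)_ℓ` with basis `{d_0, …, d_ℓ}`, the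
`k`-linear maps `ε` (with `ε(d_0) = 1` and `ε(d_n) = 0` for `0 < n ≤ ℓ`) and `δ` (with
`δ(d_n) = ∑_{r+s+t=n} (n!/(r!·s!·t!))·λ^t·(d_{r+t} ⊗ d_{s+t})`) make `C(λ)_ℓ` a
coassociative counital `k`-coalgebra.  Moreover, for any associative unital `k`-algebra
`A`, under `f ↦ (f(d_0), …, f(d_ℓ))` the convolution unit is `(1, 0, …, 0)` and the
convolution product is the `λ`-weighted Hurwitz product. -/
theorem stmt18 {k A : Type*} [CommRing k] [Algebra ℚ k] [Ring A] [Algebra k A]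
    (l : ℕ) (lam : k) :
    -- the stated values of ε and δ on the basis
    (epsCl k l (dB k l 0) = 1) ∧
    (∀ n : ℕ, 0 < n → n ≤ l → epsCl k l (dB k l n) = 0) ∧
    (∀ n : ℕ, n ≤ l → delCl k l lam (dB k l n) = wCl k l lam n) ∧
    -- coassociativity
    (∀ v : Fin (l + 1) → k,
      TensorProduct.assoc k _ _ _
          (LinearMap.rTensor (Fin (l + 1) → k) (delCl k l lam) (delCl k l lam v)) =
        LinearMap.lTensor (Fin (l + 1) → k) (delCl k l lam) (delCl k l lam v)) ∧
    -- counit laws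
    (∀ v : Fin (l + 1) → k,
      TensorProduct.lid k (Fin (l + 1) → k)
        (LinearMap.rTensor (Fin (l + 1) → k) (epsCl k l) (delCl k l lam v)) = v) ∧
    (∀ v : Fin (l + 1) → k,
      TensorProduct.rid k (Fin (l + 1) → k)
        (LinearMap.lTensor (Fin (l + 1) → k) (epsCl k l) (delCl k l lam v)) = v) ∧
    -- the convolution unit corresponds to (1, 0, …, 0)
    (algebraMap k A (epsCl k l (dB k l 0)) = 1) ∧
    (∀ n : ℕ, 0 < n → n ≤ l → algebraMap k A (epsCl k l (dB k l n)) = 0) ∧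
    -- the convolution product is the λ-weighted Hurwitz product
    (∀ f g : (Fin (l + 1) → k) →ₗ[k] A, ∀ n : ℕ, n ≤ l →
      convCl l lam f g (dB k l n) =
        ∑ x ∈ Finset.HasAntidiagonal.antidiagonal n, ∑ y ∈ Finset.HasAntidiagonal.antidiagonal x.2,
          (n.factorial / (x.1.factorial * y.1.factorial * y.2.factorial)) •
            (lam ^ y.2 • (f (dB k l (x.1 + y.2)) * g (dB k l (y.1 + y.2))))) :=
  stmt18_general l lam
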